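/- Let S be an association scheme on a finite set X, let T₁ and T₂ be normal closed subsets of S, let p, q, r ∈ S, and let (y,z) ∈ r. Then |y(pT₁) ∩ z(q*T₂)| = Σ_{p' ∈ pT₁} Σ_{q' ∈ qT₂} a_{p'q'r}, where pT₁, qT₂ and q*T₂ denote complex products of subsets of S. In particular, this cardinality depends only on T₁, T₂, p, q and r, and not on the choice of (y,z) ∈ r. -/

import Mathlib

/-!
Common framework for association schemes, following the paper
"A new semidirect product for association schemes".
-/

/-- The diagonal relation `1_X` on a set `X`. -/
def diagRel (X : Type) : Set (X × X) := {w | w.1 = w.2}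

/-- The transpose `s*` of a relation. -/
def transp {X : Type} (s : Set (X × X)) : Set (X × X) := Prod.swap '' s

/-- The structure constant `a_{pqr}`: for `(x,y) ∈ r`, the number of `z` with
`(x,z) ∈ p` and `(z,y) ∈ q` (well-defined for elements of a scheme). -/
noncomputable def aC {X : Type} (p q r : Set (X × X)) : ℕ :=
  sSup {n | ∃ w ∈ r, n = Nat.card {z : X // (w.1, z) ∈ p ∧ (z, w.2) ∈ q}}

/-- `S` is an association scheme on `X`. -/
def IsScheme {X : Type} (S : Set (Set (X × X))) : Prop :=
  (∀ s ∈ S, s.Nonempty) ∧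
  (∀ w : X × X, ∃! s, s ∈ S ∧ w ∈ s) ∧
  diagRel X ∈ S ∧
  (∀ s ∈ S, transp s ∈ S) ∧
  (∀ p ∈ S, ∀ q ∈ S, ∀ r ∈ S, ∀ w ∈ r,
    Nat.card {z : X // (w.1, z) ∈ p ∧ (z, w.2) ∈ q} = aC p q r)

/-- Complex product of two relations relative to a scheme `S`:
`pq = {r ∈ S : a_{pqr} > 0}`. -/
noncomputable def cmulS {X : Type} (S : Set (Set (X × X))) (p q : Set (X × X)) :
    Set (Set (X × X)) :=
  {r | r ∈ S ∧ 0 < aC p q r}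

/-- Complex product of two subsets of a scheme. -/
noncomputable def setMulS {X : Type} (S : Set (Set (X × X)))
    (Pp Qq : Set (Set (X × X))) : Set (Set (X × X)) :=
  ⋃ p ∈ Pp, ⋃ q ∈ Qq, cmulS S p q

/-- `T` is a closed subset of the scheme `S` (i.e. `T ⊆ S` and `T*T ⊆ T`). -/
def IsClosedIn {X : Type} (S T : Set (Set (X × X))) : Prop :=
  T ⊆ S ∧ ∀ p ∈ T, ∀ q ∈ T, cmulS S (transp p) q ⊆ T

/-- `T` is a normal subset of the scheme `S` (i.e. `pT = Tp` for all `p ∈ S`). -/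
noncomputable def IsNormalIn {X : Type} (S T : Set (Set (X × X))) : Prop :=
  ∀ p ∈ S, setMulS S {p} T = setMulS S T {p}

/-- `xs = {y : (x,y) ∈ s}`. -/
def pimg {X : Type} (s : Set (X × X)) (x : X) : Set X := {y | (x, y) ∈ s}

/-- The coset `xT` of a (closed) subset `T` of a scheme. -/
def coset {X : Type} (T : Set (Set (X × X))) (x : X) : Set X :=
  {y | ∃ t ∈ T, (x, y) ∈ t}

/-- The set `X/T` of cosets. -/
def cosets {X : Type} (T : Set (Set (X × X))) : Set (Set X) :=
  {C | ∃ x, C = coset T x}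

/-- The quotient relation `s^T` on cosets. -/
def quotRel {X : Type} (T : Set (Set (X × X))) (s : Set (X × X)) :
    Set (Set X × Set X) :=
  {w | ∃ x₁ x₂, w = (coset T x₁, coset T x₂) ∧
    ∃ p ∈ s, p.1 ∈ coset T x₁ ∧ p.2 ∈ coset T x₂}

/-- The relations of the quotient scheme `S//T`. -/
def quotS {X : Type} (S T : Set (Set (X × X))) : Set (Set (Set X × Set X)) :=
  {r | ∃ s ∈ S, r = quotRel T s}

/-- A presentation of a (based) scheme: a set of points inside an ambient type,
a set of relations, and a basepoint. -/
structure Pres (P : Type) where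
  pts : Set P
  rels : Set (Set (P × P))
  base : P

/-- A scheme `S` on the whole of `X`, based at `x0`, as a presentation. -/
def fullPres {X : Type} (S : Set (Set (X × X))) (x0 : X) : Pres X :=
  ⟨Set.univ, S, x0⟩

/-- The quotient scheme `S//T` on `X/T`, based at `x0 T`, as a presentation. -/
def quotPres {X : Type} (S T : Set (Set (X × X))) (x0 : X) : Pres (Set X) :=
  ⟨cosets T, quotS S T, coset T x0⟩

/-- The subscheme of a scheme defined by the coset `xT` of a closed subset `T`,
as a presentation. -/
def subPres {X : Type} (T : Set (Set (X × X))) (x : X) : Pres X :=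
  ⟨coset T x, {r | ∃ t ∈ T, r = t ∩ (coset T x ×ˢ coset T x)}, x⟩

/-- `f` is a morphism of schemes between two presentations: it maps points to
points, and pairs lying in the same relation to pairs lying in the same relation. -/
def IsMorOn {P Q : Type} (A : Pres P) (B : Pres Q) (f : P → Q) : Prop :=
  Set.MapsTo f A.pts B.pts ∧
  ∀ s ∈ A.rels, ∀ w ∈ s, ∀ w' ∈ s,
    ∃ t ∈ B.rels, (f w.1, f w.2) ∈ t ∧ (f w'.1, f w'.2) ∈ t

/-- The induced map on scheme elements sends `s` to `t` (i.e. `s φ_S = t`):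
every pair of `s` is mapped into `t`. -/
def elemMapsTo {P Q : Type} (f : P → Q) (s : Set (P × P)) (t : Set (Q × Q)) : Prop :=
  ∀ w ∈ s, (f w.1, f w.2) ∈ t

/-- `f` is an isomorphism of schemes: a morphism which is bijective on points and
whose induced map on scheme elements is bijective. -/
def IsIsoOn {P Q : Type} (A : Pres P) (B : Pres Q) (f : P → Q) : Prop :=
  IsMorOn A B f ∧ Set.BijOn f A.pts B.pts ∧
  ∀ t ∈ B.rels, ∃! s, s ∈ A.rels ∧ elemMapsTo f s t

/-- A based isomorphism of schemes. -/
def IsBasedIsoOn {P Q : Type} (A : Pres P) (B : Pres Q) (f : P → Q) : Prop :=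
  IsIsoOn A B f ∧ f A.base = B.base

/-- A based association scheme on a finite based set. -/
structure BScheme : Type 1 where
  X : Type
  fin : Fintype X
  base : X
  S : Set (Set (X × X))
  isScheme : IsScheme S

/-- A morphism in the category 𝒞: a normal closed subset on each side together
with a based isomorphism between the corresponding quotient schemes. -/
structure HomC (A B : BScheme) where
  TN : Set (Set (A.X × A.X))
  UN : Set (Set (B.X × B.X))
  TN_cl : IsClosedIn A.S TN
  TN_n : IsNormalIn A.S TN
  UN_cl : IsClosedIn B.S UN
  UN_n : IsNormalIn B.S UN
  f : Set A.X → Set B.X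
  iso : IsBasedIsoOn (quotPres A.S TN A.base) (quotPres B.S UN B.base) f

/-- `t^{T_φ} φ̃ = u^{U_φ}`: the induced map on quotient scheme elements sends
the class of `t` to the class of `u`. -/
def elemRel {A B : BScheme} (φ : HomC A B) (t : Set (A.X × A.X))
    (u : Set (B.X × B.X)) : Prop :=
  elemMapsTo φ.f (quotRel φ.TN t) (quotRel φ.UN u)

/-- The normal closed subset `T_{φψ}` of the composite. -/
def Tcomp {A B C : BScheme} (φ : HomC A B) (ψ : HomC B C) :
    Set (Set (A.X × A.X)) :=
  {t | t ∈ A.S ∧ ∃ u ∈ B.S, elemRel φ t u ∧ elemRel ψ u (diagRel C.X)}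

/-- The normal closed subset `V_{φψ}` of the composite. -/
def Vcomp {A B C : BScheme} (φ : HomC A B) (ψ : HomC B C) :
    Set (Set (C.X × C.X)) :=
  {v | v ∈ C.S ∧ ∃ u ∈ B.S, elemRel φ (diagRel A.X) u ∧ elemRel ψ u v}

/-- `ρ` is a composite of `φ` and `ψ` in the category 𝒞. -/
def IsComposite {A B C : BScheme} (φ : HomC A B) (ψ : HomC B C) (ρ : HomC A C) : Prop :=
  ρ.TN = Tcomp φ ψ ∧ ρ.UN = Vcomp φ ψ ∧
  ∀ (x : A.X) (y : B.X) (z : C.X),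
    φ.f (coset φ.TN x) = coset φ.UN y →
    ψ.f (coset ψ.TN y) = coset ψ.UN z →
    ρ.f (coset (Tcomp φ ψ) x) = coset (Vcomp φ ψ) z

/-- The identity morphism of 𝒞 at `A`: both normal closed subsets are `{1_X}`
and the isomorphism is the identity of `A//{1_X}`. -/
def IsIdHom {A : BScheme} (ι : HomC A A) : Prop :=
  ι.TN = {diagRel A.X} ∧ ι.UN = {diagRel A.X} ∧
  ∀ x : A.X, ι.f (coset {diagRel A.X} x) = coset {diagRel A.X} x

/-- A `τ_T`-scheme on the based set underlying `T`. -/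
structure TauSchemeOn (T : BScheme) where
  rels : Set (Set (T.X × T.X))
  isScheme : IsScheme rels
  alpha : Set (T.X × T.X) → Set (T.X × T.X)
  alpha_bij : Set.BijOn alpha T.S rels
  alpha_one : alpha (diagRel T.X) = diagRel T.X
  alpha_star : ∀ p ∈ T.S, alpha (transp p) = transp (alpha p)
  alpha_const : ∀ p ∈ T.S, ∀ q ∈ T.S, ∀ r ∈ T.S,
    aC p q r = aC (alpha p) (alpha q) (alpha r)

/-- The based scheme underlying a `τ`-scheme. -/
abbrev TauSchemeOn.toB {T : BScheme} (Z : TauSchemeOn T) : BScheme :=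
  ⟨T.X, T.fin, T.base, Z.rels, Z.isScheme⟩

/-- An action `ζ` of a based scheme `U` on a based scheme `T`. -/
structure SchemeAction (U T : BScheme) where
  /-- the `τ`-scheme `ζ_y = (T_y, α^y)` for each `y ∈ Y` -/
  Z : U.X → TauSchemeOn T
  /-- the morphism `ζ_{y₁}^{y₂} ∈ Hom_𝒞(T_{y₁}, T_{y₂})` -/
  hom : ∀ y1 y2 : U.X, HomC (Z y1).toB (Z y2).toB
  /-- (1) `T_{y*} = T` -/
  base_rels : (Z U.base).rels = T.S
  /-- (1) `α^{y*} = id` -/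
  base_alpha : ∀ p, (Z U.base).alpha p = p
  /-- (2) `ζ_y^y` is the identity morphism -/
  hom_refl_TN : ∀ y : U.X, (hom y y).TN = {diagRel T.X}
  hom_refl_UN : ∀ y : U.X, (hom y y).UN = {diagRel T.X}
  hom_refl_f : ∀ (y : U.X) (x : T.X),
    (hom y y).f (coset {diagRel T.X} x) = coset {diagRel T.X} x
  /-- (3) `ζ_{y₂}^{y₁} = (ζ_{y₁}^{y₂})*` -/
  hom_symm_TN : ∀ y1 y2 : U.X, (hom y2 y1).TN = (hom y1 y2).UN
  hom_symm_UN : ∀ y1 y2 : U.X, (hom y2 y1).UN = (hom y1 y2).TN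
  hom_symm_f : ∀ y1 y2 : U.X,
    Set.InvOn (hom y2 y1).f (hom y1 y2).f
      (cosets (hom y1 y2).TN) (cosets (hom y1 y2).UN)
  /-- (4) `ζ_{y₁}^{y₂}(τ)` depends only on the element `u ∈ U` containing `(y₁,y₂)` -/
  zeta_welldef : ∀ u ∈ U.S, ∀ y1 y2 y1' y2' : U.X, (y1, y2) ∈ u → (y1', y2') ∈ u →
    ∀ Pp : Set (Set (T.X × T.X)),
      {u' | u' ∈ T.S ∧ ∃ t ∈ Pp,
        elemRel (hom y1 y2) ((Z y1).alpha t) ((Z y2).alpha u')} =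
      {u' | u' ∈ T.S ∧ ∃ t ∈ Pp,
        elemRel (hom y1' y2') ((Z y1').alpha t) ((Z y2').alpha u')}
  /-- (5) `ζ_{y₁}^{y₃} ≤ ζ_{y₁}^{y₂} ζ_{y₂}^{y₃}` -/
  le_comp : ∀ y1 y2 y3 : U.X,
    (hom y1 y3).TN ⊆ Tcomp (hom y1 y2) (hom y2 y3) ∧
    (hom y1 y3).UN ⊆ Vcomp (hom y1 y2) (hom y2 y3) ∧
    ∀ x x2 x3 : T.X,
      (hom y1 y2).f (coset (hom y1 y2).TN x) = coset (hom y1 y2).UN x2 →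
      (hom y2 y3).f (coset (hom y2 y3).TN x2) = coset (hom y2 y3).UN x3 →
      (hom y1 y3).f (coset (hom y1 y3).TN x) ⊆
        coset (Vcomp (hom y1 y2) (hom y2 y3)) x3

/-- The map `ζ_u` on subsets of `τ` induced by any `(y₁,y₂) ∈ u`. -/
def SchemeAction.zetaU {U T : BScheme} (act : SchemeAction U T)
    (u : Set (U.X × U.X)) (Pp : Set (Set (T.X × T.X))) : Set (Set (T.X × T.X)) :=
  {u' | ∃ y1 y2 : U.X, (y1, y2) ∈ u ∧ u' ∈ T.S ∧
    ∃ t ∈ Pp, elemRel (act.hom y1 y2) ((act.Z y1).alpha t) ((act.Z y2).alpha u')}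

/-- The relation `[u,t]` on `Y × X`. -/
def SchemeAction.rel {U T : BScheme} (act : SchemeAction U T)
    (u : Set (U.X × U.X)) (t : Set (T.X × T.X)) :
    Set ((U.X × T.X) × (U.X × T.X)) :=
  {w | (w.1.1, w.2.1) ∈ u ∧
    ((act.hom w.1.1 w.2.1).f (coset (act.hom w.1.1 w.2.1).TN w.1.2),
      coset (act.hom w.1.1 w.2.1).UN w.2.2) ∈
      quotRel (act.hom w.1.1 w.2.1).UN ((act.Z w.2.1).alpha t)}

/-- The semidirect product `U ⋉_ζ T` as a set of relations on `Y × X`. -/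
def SchemeAction.sdp {U T : BScheme} (act : SchemeAction U T) :
    Set (Set ((U.X × T.X) × (U.X × T.X))) :=
  {r | ∃ u ∈ U.S, ∃ t ∈ T.S, r = act.rel u t}

/-- The valency `n_s = a_{s s* 1}` of a relation. -/
noncomputable def nval {X : Type} (s : Set (X × X)) : ℕ :=
  aC s (transp s) (diagRel X)

/-!
Because `T₂` is closed and normal, `q*T₂ = (qT₂)*`, so `x ∈ z(q*T₂)` exactly when `(x, z) ∈ q'`
for some `q' ∈ qT₂`. As the relations of `S` partition `X × X`, the intersection
`y(pT₁) ∩ z(q*T₂)` is then the disjoint union, over `p' ∈ pT₁` and `q' ∈ qT₂`, of the sets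
`{x | (y, x) ∈ p', (x, z) ∈ q'}`, of sizes `a_{p'q'r}`.
-/

section AssociationScheme

variable {X : Type} {S T : Set (Set (X × X))}

@[simp]
lemma mem_transp {s : Set (X × X)} {a b : X} : (a, b) ∈ transp s ↔ (b, a) ∈ s := by
  simp [transp, Set.image_swap_eq_preimage_swap]

@[simp]
lemma transp_transp (s : Set (X × X)) : transp (transp s) = s := by
  ext ⟨a, b⟩
  simp

namespace IsScheme

variable (hS : IsScheme S)
include hS

lemma nonempty {s : Set (X × X)} (hs : s ∈ S) : s.Nonempty := hS.1 s hs

lemma eq_of_mem {s s' : Set (X × X)} {w : X × X} (hs : s ∈ S) (hs' : s' ∈ S)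
    (hw : w ∈ s) (hw' : w ∈ s') : s = s' :=
  (hS.2.1 w).unique ⟨hs, hw⟩ ⟨hs', hw'⟩

lemma diagRel_mem : diagRel X ∈ S := hS.2.2.1

lemma transp_mem {s : Set (X × X)} (hs : s ∈ S) : transp s ∈ S := hS.2.2.2.1 s hs

lemma natCard_eq_aC {p q r : Set (X × X)} (hp : p ∈ S) (hq : q ∈ S) (hr : r ∈ S)
    {x y : X} (hxy : (x, y) ∈ r) :
    Nat.card {z : X // (x, z) ∈ p ∧ (z, y) ∈ q} = aC p q r :=
  hS.2.2.2.2 p hp q hq r hr (x, y) hxy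

lemma aC_pos_iff [Finite X] {p q r : Set (X × X)} (hp : p ∈ S) (hq : q ∈ S) (hr : r ∈ S)
    {x y : X} (hxy : (x, y) ∈ r) : 0 < aC p q r ↔ ∃ z, (x, z) ∈ p ∧ (z, y) ∈ q := by
  rw [← hS.natCard_eq_aC hp hq hr hxy, Nat.card_pos_iff, nonempty_subtype]
  exact and_iff_left inferInstance

lemma aC_transp {p q r : Set (X × X)} (hp : p ∈ S) (hq : q ∈ S) (hr : r ∈ S) :
    aC (transp q) (transp p) (transp r) = aC p q r := by
  obtain ⟨⟨a, b⟩, hab⟩ := hS.nonempty hr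
  rw [← hS.natCard_eq_aC hp hq hr hab,
    ← hS.natCard_eq_aC (hS.transp_mem hq) (hS.transp_mem hp) (hS.transp_mem hr)
      (mem_transp.2 hab)]
  exact Nat.card_congr (Equiv.subtypeEquivRight fun _ => by simp [and_comm])

lemma ncard_biUnion_eq_finsum_aC [Finite X] {A B : Set (Set (X × X))} (hA : A ⊆ S)
    (hB : B ⊆ S) {r : Set (X × X)} (hr : r ∈ S) {y z : X} (hyz : (y, z) ∈ r) :
    (⋃ p' ∈ A, ⋃ q' ∈ B, {x | (y, x) ∈ p' ∧ (x, z) ∈ q'}).ncard =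
      ∑ᶠ p' ∈ A, ∑ᶠ q' ∈ B, aC p' q' r := by
  rw [A.toFinite.ncard_biUnion (fun _ _ => Set.toFinite _)]
  · refine finsum_mem_congr rfl fun p' hp' => ?_
    rw [B.toFinite.ncard_biUnion (fun _ _ => Set.toFinite _)]
    · exact finsum_mem_congr rfl fun q' hq' =>
        (Nat.card_coe_set_eq _).symm.trans (hS.natCard_eq_aC (hA hp') (hB hq') hr hyz)
    · intro q₁ hq₁ q₂ hq₂ hne
      refine Set.disjoint_left.2 fun x hx₁ hx₂ => hne ?_
      exact hS.eq_of_mem (hB hq₁) (hB hq₂) hx₁.2 hx₂.2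
  · intro p₁ hp₁ p₂ hp₂ hne
    refine Set.disjoint_left.2 fun x hx₁ hx₂ => hne ?_
    simp only [Set.mem_iUnion, Set.mem_ofPred_eq] at hx₁ hx₂
    obtain ⟨_, _, hx₁, -⟩ := hx₁
    obtain ⟨_, _, hx₂, -⟩ := hx₂
    exact hS.eq_of_mem (hA hp₁) (hA hp₂) hx₁ hx₂

end IsScheme

lemma mem_setMulS_singleton_left {a s : Set (X × X)} :
    s ∈ setMulS S {a} T ↔ s ∈ S ∧ ∃ t ∈ T, 0 < aC a t s := by
  simp [setMulS, cmulS]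

lemma mem_setMulS_singleton_right {a s : Set (X × X)} :
    s ∈ setMulS S T {a} ↔ s ∈ S ∧ ∃ t ∈ T, 0 < aC t a s := by
  simp [setMulS, cmulS]

lemma setMulS_singleton_left_subset {a : Set (X × X)} : setMulS S {a} T ⊆ S :=
  fun _ hs => (mem_setMulS_singleton_left.1 hs).1

namespace IsClosedIn

variable [Finite X] (hS : IsScheme S) (hT : IsClosedIn S T)
include hS hT

lemma transp_mem {t : Set (X × X)} (ht : t ∈ T) : transp t ∈ T := by
  have htS := hT.1 ht
  obtain ⟨⟨a, b⟩, hab⟩ := hS.nonempty htS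
  have hdiag : diagRel X ∈ T := hT.2 t ht t ht ⟨hS.diagRel_mem,
    (hS.aC_pos_iff (hS.transp_mem htS) htS hS.diagRel_mem (show (b, b) ∈ diagRel X from rfl)).2
      ⟨a, mem_transp.2 hab, hab⟩⟩
  exact hT.2 t ht _ hdiag ⟨hS.transp_mem htS,
    (hS.aC_pos_iff (hS.transp_mem htS) hS.diagRel_mem (hS.transp_mem htS)
      (mem_transp.2 hab)).2 ⟨a, mem_transp.2 hab, rfl⟩⟩

lemma mem_setMulS_transp_iff (hTn : IsNormalIn S T) {q s : Set (X × X)} (hq : q ∈ S) :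
    s ∈ setMulS S {transp q} T ↔ transp s ∈ setMulS S {q} T := by
  rw [hTn _ (hS.transp_mem hq), mem_setMulS_singleton_right, mem_setMulS_singleton_left]
  constructor
  · rintro ⟨hs, t, ht, hpos⟩
    have h := hS.aC_transp (hT.1 ht) (hS.transp_mem hq) hs
    rw [transp_transp] at h
    exact ⟨hS.transp_mem hs, transp t, hT.transp_mem hS ht, h ▸ hpos⟩
  · rintro ⟨hs, t, ht, hpos⟩
    have h := hS.aC_transp hq (hT.1 ht) hs
    rw [transp_transp] at h
    exact ⟨transp_transp s ▸ hS.transp_mem hs, transp t, hT.transp_mem hS ht, h ▸ hpos⟩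

lemma coset_setMulS_transp (hTn : IsNormalIn S T) {q : Set (X × X)} (hq : q ∈ S) (z : X) :
    coset (setMulS S {transp q} T) z = {x | ∃ q' ∈ setMulS S {q} T, (x, z) ∈ q'} := by
  ext x
  constructor
  · rintro ⟨s, hs, hzx⟩
    exact ⟨transp s, (hT.mem_setMulS_transp_iff hS hTn hq).1 hs, mem_transp.2 hzx⟩
  · rintro ⟨q', hq', hxz⟩
    refine ⟨transp q', ?_, mem_transp.2 hxz⟩
    rwa [hT.mem_setMulS_transp_iff hS hTn hq, transp_transp]

lemma coset_inter_coset_setMulS_transp (hTn : IsNormalIn S T) {q : Set (X × X)} (hq : q ∈ S)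
    (P : Set (Set (X × X))) (y z : X) :
    coset P y ∩ coset (setMulS S {transp q} T) z =
      ⋃ p' ∈ P, ⋃ q' ∈ setMulS S {q} T, {x | (y, x) ∈ p' ∧ (x, z) ∈ q'} := by
  rw [hT.coset_setMulS_transp hS hTn hq]
  ext x
  simp only [coset, Set.mem_inter_iff, Set.mem_ofPred_eq, Set.mem_iUnion, exists_prop]
  tauto

end IsClosedIn

end AssociationScheme

theorem stmt5_general (X : Type) [Fintype X] (S : Set (Set (X × X))) (hS : IsScheme S)
    (T1 T2 : Set (Set (X × X)))
    (h2c : IsClosedIn S T2) (h2n : IsNormalIn S T2)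
    (p q r : Set (X × X)) (hq : q ∈ S) (hr : r ∈ S)
    (y z : X) (hyz : (y, z) ∈ r) :
    Nat.card ↥(coset (setMulS S {p} T1) y ∩ coset (setMulS S {transp q} T2) z) =
      (∑ᶠ p' ∈ setMulS S {p} T1, ∑ᶠ q' ∈ setMulS S {q} T2, aC p' q' r) ∧
    ∀ y' z' : X, (y', z') ∈ r →
      Nat.card ↥(coset (setMulS S {p} T1) y' ∩ coset (setMulS S {transp q} T2) z') =
      Nat.card ↥(coset (setMulS S {p} T1) y ∩ coset (setMulS S {transp q} T2) z) := by
  have key : ∀ y' z' : X, (y', z') ∈ r →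
      Nat.card ↥(coset (setMulS S {p} T1) y' ∩ coset (setMulS S {transp q} T2) z') =
        ∑ᶠ p' ∈ setMulS S {p} T1, ∑ᶠ q' ∈ setMulS S {q} T2, aC p' q' r := by
    intro y' z' hyz'
    rw [h2c.coset_inter_coset_setMulS_transp hS h2n hq, Nat.card_coe_set_eq]
    exact hS.ncard_biUnion_eq_finsum_aC setMulS_singleton_left_subset
      setMulS_singleton_left_subset hr hyz'
  exact ⟨key y z hyz, fun y' z' hyz' => (key y' z' hyz').trans (key y z hyz).symm⟩

theorem stmt5 (X : Type) [Fintype X] (S : Set (Set (X × X))) (hS : IsScheme S)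
    (T1 T2 : Set (Set (X × X)))
    (h1c : IsClosedIn S T1) (h1n : IsNormalIn S T1)
    (h2c : IsClosedIn S T2) (h2n : IsNormalIn S T2)
    (p q r : Set (X × X)) (hp : p ∈ S) (hq : q ∈ S) (hr : r ∈ S)
    (y z : X) (hyz : (y, z) ∈ r) :
    Nat.card ↥(coset (setMulS S {p} T1) y ∩ coset (setMulS S {transp q} T2) z) =
      (∑ᶠ p' ∈ setMulS S {p} T1, ∑ᶠ q' ∈ setMulS S {q} T2, aC p' q' r) ∧
    ∀ y' z' : X, (y', z') ∈ r →
      Nat.card ↥(coset (setMulS S {p} T1) y' ∩ coset (setMulS S {transp q} T2) z') =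
      Nat.card ↥(coset (setMulS S {p} T1) y ∩ coset (setMulS S {transp q} T2) z) :=
  stmt5_general X S hS T1 T2 h2c h2n p q r hq hr y z hyz
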